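/- In a finite Möbius plane in which every circle contains exactly q+1 points (q ≥ 2), for every point a the number of circles containing a is exactly q² + q. -/

import Mathlib

/-- A finite Möbius plane: a finite set of points `S` with a set of subsets of `S` called
circles such that (M1) any three pairwise distinct points lie on exactly one circle,
(M2) for every circle `A`, every `a ∈ A` and every `b ∉ A` there is exactly one circle
`B` with `a, b ∈ B` and `A ∩ B = {a}`, and (M3) `|S| ≥ 4` and there are four pairwise
distinct points not lying on a common circle. -/
structure FiniteMoebiusPlane (S : Type*) [Fintype S] where
  circles : Set (Set S)
  M1 : ∀ a b c : S, a ≠ b → b ≠ c → a ≠ c →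
    ∃! C : Set S, C ∈ circles ∧ a ∈ C ∧ b ∈ C ∧ c ∈ C
  M2 : ∀ A ∈ circles, ∀ a ∈ A, ∀ b ∉ A,
    ∃! B : Set S, B ∈ circles ∧ a ∈ B ∧ b ∈ B ∧ A ∩ B = {a}
  M3 : 4 ≤ Fintype.card S ∧ ∃ p : Fin 4 → S, Function.Injective p ∧
    ∀ C ∈ circles, ¬ ∀ i : Fin 4, p i ∈ C

/-!
Every pencil of circles through two distinct points `a, b` has `q + 1` members: fix a circle `A`
through `a` avoiding `b`; each `x ∈ A` lies on exactly one circle of the pencil meeting `A` in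
`{a, x}`, which for `x = a` is the circle tangent to `A` given by (M2). Double counting the
incidences between that pencil and the points other than `a, b` gives `|S| = q² + 1`; double
counting those between the circles through `a` and the points other than `a` then gives
`N · q = q² · (q + 1)` for the number `N` of circles through `a`.
-/

theorem ExistsUnique.ncard_setOf_eq_one {α : Type*} {p : α → Prop} (h : ∃! x, p x) :
    {x | p x}.ncard = 1 := by
  obtain ⟨x, hx, huniq⟩ := h
  exact Set.ncard_eq_one.mpr ⟨x, Set.ext fun y => ⟨huniq y, fun hy => hy ▸ hx⟩⟩

namespace Set

variable {α β : Type*} {s : Set α} {t : Set β}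

theorem ncard_mul_eq_ncard_mul (r : α → β → Prop) {m n : ℕ}
    (hm : ∀ a ∈ s, {b ∈ t | r a b}.ncard = m) (hn : ∀ b ∈ t, {a ∈ s | r a b}.ncard = n)
    (hs : s.Finite := by toFinite_tac) (ht : t.Finite := by toFinite_tac) :
    s.ncard * m = t.ncard * n := by
  classical
  rw [ncard_eq_toFinset_card s hs, ncard_eq_toFinset_card t ht]
  refine Finset.card_mul_eq_card_mul r (fun a ha => ?_) (fun b hb => ?_)
  · rw [← ncard_coe_finset, Finset.coe_bipartiteAbove]
    simp only [Finite.mem_toFinset]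
    exact hm a (hs.mem_toFinset.mp ha)
  · rw [← ncard_coe_finset, Finset.coe_bipartiteBelow]
    simp only [Finite.mem_toFinset]
    exact hn b (ht.mem_toFinset.mp hb)

theorem ncard_eq_ncard_of_existsUnique (r : α → β → Prop)
    (hs : ∀ a ∈ s, ∃! b, b ∈ t ∧ r a b) (ht : ∀ b ∈ t, ∃! a, a ∈ s ∧ r a b)
    (hsf : s.Finite := by toFinite_tac) (htf : t.Finite := by toFinite_tac) :
    s.ncard = t.ncard := by
  simpa using ncard_mul_eq_ncard_mul r (m := 1) (n := 1)
    (fun a ha => (hs a ha).ncard_setOf_eq_one) (fun b hb => (ht b hb).ncard_setOf_eq_one) hsf htf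

end Set

namespace FiniteMoebiusPlane

variable {S : Type*} [Fintype S]

def circlesThrough (MP : FiniteMoebiusPlane S) (a : S) : Set (Set S) := {C ∈ MP.circles | a ∈ C}

def pencil (MP : FiniteMoebiusPlane S) (a b : S) : Set (Set S) :=
  {C ∈ MP.circlesThrough a | b ∈ C}

theorem exists_ne_ne (MP : FiniteMoebiusPlane S) (a b : S) : ∃ c, c ≠ a ∧ c ≠ b :=
  ENat.exists_ne_ne_of_three_le (by
    rw [ENat.card_eq_coe_fintype_card]
    exact_mod_cast (by linarith [MP.M3.1] : 3 ≤ Fintype.card S)) a b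

variable {MP : FiniteMoebiusPlane S}

theorem eq_of_three_mem {A B : Set S} {a b c : S} (hA : A ∈ MP.circles) (hB : B ∈ MP.circles)
    (hab : a ≠ b) (hbc : b ≠ c) (hac : a ≠ c) (haA : a ∈ A) (hbA : b ∈ A) (hcA : c ∈ A)
    (haB : a ∈ B) (hbB : b ∈ B) (hcB : c ∈ B) : A = B :=
  (MP.M1 a b c hab hbc hac).unique ⟨hA, haA, hbA, hcA⟩ ⟨hB, haB, hbB, hcB⟩

theorem inter_eq_pair {A B : Set S} {a x : S} (hA : A ∈ MP.circles) (hB : B ∈ MP.circles)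
    (hAB : A ≠ B) (ha : a ∈ A ∩ B) (hx : x ∈ A ∩ B) (hxa : x ≠ a) :
    A ∩ B = {a, x} := by
  refine (Set.insert_subset ha (Set.singleton_subset_iff.mpr hx)).antisymm' fun y hy => ?_
  by_contra hy'
  simp only [Set.mem_insert_iff, Set.mem_singleton_iff, not_or] at hy'
  exact hAB <| eq_of_three_mem hA hB (Ne.symm hxa) (Ne.symm hy'.2) (Ne.symm hy'.1)
    ha.1 hx.1 hy.1 ha.2 hx.2 hy.2

theorem exists_not_mem {A : Set S} (hA : A ∈ MP.circles) : ∃ d, d ∉ A := by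
  obtain ⟨-, p, -, hp⟩ := MP.M3
  obtain ⟨i, hi⟩ := not_forall.mp (hp A hA)
  exact ⟨p i, hi⟩

theorem exists_mem_circles_mem_not_mem {a b : S} (hab : a ≠ b) :
    ∃ A ∈ MP.circles, a ∈ A ∧ b ∉ A := by
  obtain ⟨c, hca, hcb⟩ := MP.exists_ne_ne a b
  obtain ⟨A₀, ⟨hA₀, haA₀, hbA₀, -⟩, -⟩ := MP.M1 a b c hab hcb.symm hca.symm
  obtain ⟨d, hd⟩ := exists_not_mem hA₀
  obtain ⟨A, ⟨hA, haA, -, hA₀A⟩, -⟩ := MP.M2 A₀ hA₀ a haA₀ d hd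
  refine ⟨A, hA, haA, fun hbA => hab ?_⟩
  have hb : b ∈ A₀ ∩ A := ⟨hbA₀, hbA⟩
  rw [hA₀A] at hb
  exact hb.symm

theorem existsUnique_mem_pencil_inter_eq_pair {A : Set S} {a b x : S} (hA : A ∈ MP.circles)
    (haA : a ∈ A) (hbA : b ∉ A) (hxA : x ∈ A) :
    ∃! C, C ∈ MP.pencil a b ∧ A ∩ C = {a, x} := by
  rcases eq_or_ne x a with rfl | hxa
  · simpa only [pencil, circlesThrough, Set.mem_sep_iff, Set.pair_eq_singleton, and_assoc]
      using MP.M2 A hA x haA b hbA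
  have hxb : x ≠ b := fun h => hbA (h ▸ hxA)
  obtain ⟨C, ⟨hC, haC, hbC, hxC⟩, huniq⟩ :=
    MP.M1 a b x (fun h => hbA (h ▸ haA)) hxb.symm hxa.symm
  refine ⟨C, ⟨⟨⟨hC, haC⟩, hbC⟩, ?_⟩,
    fun D ⟨⟨⟨hD, haD⟩, hbD⟩, hAD⟩ => huniq D ⟨hD, haD, hbD, ?_⟩⟩
  · exact inter_eq_pair hA hC (fun h => hbA (h ▸ hbC)) ⟨haA, haC⟩ ⟨hxA, hxC⟩ hxa
  · exact (hAD.symm.subset (Set.mem_insert_of_mem a rfl)).2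

theorem existsUnique_mem_inter_eq_pair {A C : Set S} {a b : S} (hA : A ∈ MP.circles)
    (haA : a ∈ A) (hbA : b ∉ A) (hC : C ∈ MP.pencil a b) :
    ∃! x, x ∈ A ∧ A ∩ C = {a, x} := by
  obtain ⟨⟨hC, haC⟩, hbC⟩ := hC
  have hex : ∃ x, x ∈ A ∧ A ∩ C = {a, x} := by
    by_cases hsec : ∃ x ∈ A ∩ C, x ≠ a
    · obtain ⟨x, hx, hxa⟩ := hsec
      exact ⟨x, hx.1, inter_eq_pair hA hC (fun h => hbA (h ▸ hbC)) ⟨haA, haC⟩ hx hxa⟩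
    · push Not at hsec
      refine ⟨a, haA, ?_⟩
      rw [Set.pair_eq_singleton]
      exact Set.eq_singleton_iff_unique_mem.mpr ⟨⟨haA, haC⟩, hsec⟩
  obtain ⟨x, hxA, hx⟩ := hex
  refine ⟨x, ⟨hxA, hx⟩, fun y ⟨_, hy⟩ => ?_⟩
  rcases Set.pair_eq_pair_iff.mp (hy.symm.trans hx) with ⟨-, h⟩ | ⟨rfl, rfl⟩
  exacts [h, rfl]

theorem ncard_pencil {q : ℕ} (hcirc : ∀ C ∈ MP.circles, Nat.card ↥C = q + 1) {a b : S}
    (hab : a ≠ b) : (MP.pencil a b).ncard = q + 1 := by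
  obtain ⟨A, hA, haA, hbA⟩ := exists_mem_circles_mem_not_mem (MP := MP) hab
  rw [← Set.ncard_eq_ncard_of_existsUnique (fun x C => A ∩ C = {a, x})
    (fun x hx => existsUnique_mem_pencil_inter_eq_pair hA haA hbA hx)
    (fun C hC => existsUnique_mem_inter_eq_pair hA haA hbA hC),
    ← Nat.card_coe_set_eq, hcirc A hA]

theorem card_eq_sq_add_one {q : ℕ} (hq : 0 < q)
    (hcirc : ∀ C ∈ MP.circles, Nat.card ↥C = q + 1) :
    Nat.card S = q ^ 2 + 1 := by
  obtain ⟨a, b, hab⟩ := Fintype.exists_pair_of_one_lt_card (by linarith [MP.M3.1])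
  have hm : ∀ C ∈ MP.pencil a b, {x ∈ ({a, b} : Set S)ᶜ | x ∈ C}.ncard = q - 1 := by
    rintro C ⟨⟨hC, haC⟩, hbC⟩
    rw [Set.sep_mem_eq, ← Set.sdiff_eq_compl_inter,
      Set.ncard_sdiff (Set.insert_subset haC (Set.singleton_subset_iff.mpr hbC)),
      Set.ncard_pair hab, ← Nat.card_coe_set_eq, hcirc C hC]
    omega
  have hn : ∀ x ∈ ({a, b} : Set S)ᶜ, {C ∈ MP.pencil a b | x ∈ C}.ncard = 1 := by
    intro x hx
    simp only [Set.mem_compl_iff, Set.mem_insert_iff, Set.mem_singleton_iff, not_or] at hx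
    simpa only [pencil, circlesThrough, Set.mem_sep_iff, and_assoc]
      using (MP.M1 a b x hab (Ne.symm hx.2) (Ne.symm hx.1)).ncard_setOf_eq_one
  have hcount := Set.ncard_mul_eq_ncard_mul (fun C x => x ∈ C) hm hn
  have hcompl := Set.ncard_add_ncard_compl ({a, b} : Set S)
  rw [ncard_pencil hcirc hab, mul_one] at hcount
  rw [Set.ncard_pair hab] at hcompl
  obtain ⟨k, rfl⟩ := Nat.exists_eq_add_one_of_ne_zero hq.ne'
  rw [Nat.add_sub_cancel] at hcount
  nlinarith

end FiniteMoebiusPlane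

/-- In a finite Möbius plane in which every circle contains exactly `q + 1` points
(`q ≥ 2`), for every point `a` the number of circles containing `a` is exactly
`q² + q`. -/
theorem moebius_card_circles_through_point (S : Type*) [Fintype S]
    (MP : FiniteMoebiusPlane S) (q : ℕ) (hq : 2 ≤ q)
    (hcirc : ∀ C ∈ MP.circles, Nat.card ↥C = q + 1) (a : S) :
    Nat.card {C : Set S // C ∈ MP.circles ∧ a ∈ C} = q ^ 2 + q := by
  have hm : ∀ C ∈ MP.circlesThrough a, {x ∈ ({a} : Set S)ᶜ | x ∈ C}.ncard = q := by
    rintro C ⟨hC, haC⟩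
    rw [Set.sep_mem_eq, ← Set.sdiff_eq_compl_inter, Set.ncard_sdiff_singleton_of_mem haC,
      ← Nat.card_coe_set_eq, hcirc C hC, Nat.add_sub_cancel]
  have hn : ∀ x ∈ ({a} : Set S)ᶜ, (MP.pencil a x).ncard = q + 1 :=
    fun x hx => MP.ncard_pencil hcirc (Ne.symm hx)
  have hcount := Set.ncard_mul_eq_ncard_mul (fun C x => x ∈ C) hm hn
  rw [Set.ncard_compl, Set.ncard_singleton, MP.card_eq_sq_add_one (by omega) hcirc,
    Nat.add_sub_cancel] at hcount
  exact (Nat.card_coe_set_eq (MP.circlesThrough a)).trans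
    (Nat.eq_of_mul_eq_mul_right (by omega) (hcount.trans (by ring)))
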